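/- Let G be a finite group acting on a finite set X. For x, y ∈ X with Gx ≠ Gy and G_x ≤ G_y, let [x ↦ y] ∈ End_G(X) be the map sending g·x to g·y for every g ∈ G and fixing all other points. Then the set W = {[x ↦ y] : x, y ∈ X, Gx ≠ Gy, G_x ≤ G_y} generates End_G(X) modulo Aut_G(X), i.e., the submonoid generated by W ∪ Aut_G(X) equals End_G(X). -/

import Mathlib

/-- The monoid of all `G`-equivariant transformations of `X`, as a submonoid of
`Function.End X` (composition of functions). -/
def gEnd (G X : Type*) [Group G] [MulAction G X] : Submonoid (Function.End X) where
  carrier := {f | ∀ (g : G) (x : X), f (g • x) = g • f x}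
  one_mem' := fun _ _ => rfl
  mul_mem' := fun {f₁ f₂} h₁ h₂ g x => by
    show f₁ (f₂ (g • x)) = g • f₁ (f₂ x)
    rw [h₂, h₁]

/-- The group of all bijective `G`-equivariant transformations of `X`, as a subgroup of
`Equiv.Perm X`. -/
def gAut (G X : Type*) [Group G] [MulAction G X] : Subgroup (Equiv.Perm X) where
  carrier := {f | ∀ (g : G) (x : X), f (g • x) = g • f x}
  one_mem' := fun _ _ => rfl
  mul_mem' := fun {f₁ f₂} h₁ h₂ g x => by
    show f₁ (f₂ (g • x)) = g • f₁ (f₂ x)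
    rw [h₂, h₁]
  inv_mem' := fun {f} hf g x => f.injective (by
    have hai : ∀ z, f (f⁻¹ z) = z := fun z => Equiv.apply_symm_apply f z
    rw [hai, hf, hai])

/-- The elements of `Aut_G(X)` viewed as a set of transformations of `X`. -/
def autSet (G X : Type*) [Group G] [MulAction G X] : Set (Function.End X) :=
  (fun e : Equiv.Perm X => (e : X → X)) '' (gAut G X)

open Classical in
/-- The idempotent-like collapsing map `[x ↦ y]`: it sends `g • x` to `g • y`
and fixes every point outside the orbit of `x`.  (It is well defined as soon as
the stabilizer of `x` is contained in the stabilizer of `y`.) -/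
noncomputable def collapse {G X : Type*} [Group G] [MulAction G X] (x y : X) : X → X :=
  fun z => if h : z ∈ MulAction.orbit G x then h.choose • y else z

/-!
Induct on the number of points moved by an equivariant map `f`. If `f` is bijective it lies in
`Aut_G(X)`. Otherwise, since `X` is finite, some `u` is not in the range of `f`, hence neither is
its orbit. Then `f = [u ↦ f u] ∘ f'`, where `f'` agrees with `f` off the orbit of `u` and is the
identity on it; `f'` is equivariant and moves fewer points than `f`, which moves `u`.
-/

open MulAction

section

variable {G X : Type*} [Group G] [MulAction G X]

lemma smul_mem_orbit_iff {g : G} {z u : X} : g • z ∈ orbit G u ↔ z ∈ orbit G u := by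
  rw [← orbit_eq_iff, orbit_smul, orbit_eq_iff]

variable (G X) in
def collapseGenerators : Set (Function.End X) :=
  {f | ∃ x y : X, orbit G x ≠ orbit G y ∧ stabilizer G x ≤ stabilizer G y ∧
    f = collapse (G := G) x y}

lemma collapse_smul_apply {x y : X} (hxy : stabilizer G x ≤ stabilizer G y) (g : G) :
    collapse (G := G) x y (g • x) = g • y := by
  have h : g • x ∈ orbit G x := mem_orbit x g
  have hchoose : h.choose • x = g • x := h.choose_spec
  have hx : (g⁻¹ * h.choose) • x = x := by rw [mul_smul, hchoose, inv_smul_smul]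
  have hy : g⁻¹ • h.choose • y = y := by rw [← mul_smul]; exact hxy hx
  rw [collapse, dif_pos h, ← inv_smul_eq_iff, hy]

lemma collapse_apply_of_notMem {x y z : X} (hz : z ∉ orbit G x) :
    collapse (G := G) x y z = z :=
  dif_neg hz

lemma collapse_mem_gEnd {x y : X} (hxy : stabilizer G x ≤ stabilizer G y) :
    (collapse (G := G) x y : Function.End X) ∈ gEnd G X := by
  intro g z
  by_cases hz : z ∈ orbit G x
  · obtain ⟨k, rfl⟩ := hz
    rw [← mul_smul, collapse_smul_apply hxy, collapse_smul_apply hxy, mul_smul]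
  · rw [collapse_apply_of_notMem (smul_mem_orbit_iff.not.mpr hz), collapse_apply_of_notMem hz]

lemma mem_autSet_of_bijective {f : Function.End X} (hf : f ∈ gEnd G X)
    (hbij : Function.Bijective f) : f ∈ autSet G X :=
  ⟨Equiv.ofBijective f hbij, hf, rfl⟩

lemma stabilizer_le_stabilizer_apply {f : Function.End X} (hf : f ∈ gEnd G X) (u : X) :
    stabilizer G u ≤ stabilizer G (f u) := fun g (hg : g • u = u) =>
  show g • f u = f u by rw [← hf, hg]

lemma apply_notMem_orbit {f : Function.End X} (hf : f ∈ gEnd G X) {u : X}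
    (hu : ∀ z, f z ≠ u) (z : X) : f z ∉ orbit G u := by
  rintro ⟨k, hk⟩
  exact hu (k⁻¹ • z) (by rw [hf, ← hk, inv_smul_smul])

lemma orbit_ne_orbit_apply {f : Function.End X} (hf : f ∈ gEnd G X) {u : X}
    (hu : ∀ z, f z ≠ u) : orbit G u ≠ orbit G (f u) := fun h =>
  apply_notMem_orbit hf hu u (orbit_eq_iff.mp h.symm)

open Classical in
noncomputable def idOn (s : Set X) (f : Function.End X) : Function.End X :=
  fun z => if z ∈ s then z else f z

lemma idOn_apply_of_mem {s : Set X} {f : Function.End X} {z : X} (hz : z ∈ s) :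
    idOn s f z = z :=
  if_pos hz

lemma idOn_apply_of_notMem {s : Set X} {f : Function.End X} {z : X} (hz : z ∉ s) :
    idOn s f z = f z :=
  if_neg hz

lemma idOn_mem_gEnd {s : Set X} (hs : ∀ (g : G) (z : X), g • z ∈ s ↔ z ∈ s)
    {f : Function.End X} (hf : f ∈ gEnd G X) : idOn s f ∈ gEnd G X := by
  intro g z
  by_cases hz : z ∈ s
  · rw [idOn_apply_of_mem ((hs g z).mpr hz), idOn_apply_of_mem hz]
  · rw [idOn_apply_of_notMem ((hs g z).not.mpr hz), idOn_apply_of_notMem hz, hf]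

lemma eq_collapse_comp_idOn_orbit {f : Function.End X} (hf : f ∈ gEnd G X) {u : X}
    (hu : ∀ z, f z ≠ u) : f = collapse (G := G) u (f u) ∘ idOn (orbit G u) f := by
  funext z
  change f z = collapse (G := G) u (f u) (idOn (orbit G u) f z)
  by_cases hz : z ∈ orbit G u
  · obtain ⟨k, rfl⟩ := mem_orbit_iff.mp hz
    rw [idOn_apply_of_mem (mem_orbit u k),
      collapse_smul_apply (stabilizer_le_stabilizer_apply hf u), hf]
  · rw [idOn_apply_of_notMem hz, collapse_apply_of_notMem (apply_notMem_orbit hf hu z)]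

lemma ncard_moved_idOn_lt [Finite X] {f : Function.End X} {s : Set X} {u : X} (hus : u ∈ s)
    (hu : f u ≠ u) : {z | idOn s f z ≠ z}.ncard < {z | f z ≠ z}.ncard := by
  have hsub : {z | idOn s f z ≠ z} ⊆ {z | f z ≠ z} := fun z hz => by
    by_cases hzs : z ∈ s
    · exact absurd (idOn_apply_of_mem hzs) hz
    · rwa [Set.mem_ofPred_eq, idOn_apply_of_notMem hzs] at hz
  refine Set.ncard_lt_ncard ((Set.ssubset_iff_of_subset hsub).mpr ⟨u, hu, ?_⟩)
  exact fun h => h (idOn_apply_of_mem hus)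

lemma mem_closure_of_mem_gEnd [Finite X] {f : Function.End X} (hf : f ∈ gEnd G X) :
    f ∈ Submonoid.closure (collapseGenerators G X ∪ autSet G X) := by
  induction hn : {z | f z ≠ z}.ncard using Nat.strong_induction_on generalizing f with
  | _ n ih =>
  by_cases hsurj : Function.Surjective f
  · exact Submonoid.subset_closure <| Or.inr <|
      mem_autSet_of_bijective hf ⟨Finite.injective_iff_surjective.mpr hsurj, hsurj⟩
  obtain ⟨u, hu⟩ : ∃ u, ∀ z, f z ≠ u := by simpa [Function.Surjective] using hsurj
  have hcollapse : (collapse (G := G) u (f u) : Function.End X) ∈ collapseGenerators G X :=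
    ⟨u, f u, orbit_ne_orbit_apply hf hu, stabilizer_le_stabilizer_apply hf u, rfl⟩
  have hrest := ih _ (hn ▸ ncard_moved_idOn_lt (mem_orbit_self u) (hu u))
    (idOn_mem_gEnd (fun _ _ => smul_mem_orbit_iff) hf) rfl
  rw [eq_collapse_comp_idOn_orbit hf hu]
  exact Submonoid.mul_mem _ (Submonoid.subset_closure (Set.mem_union_left _ hcollapse)) hrest

end

theorem stmt10_general {G X : Type*} [Group G] [MulAction G X] [Finite X] :
    Submonoid.closure
      ({f : Function.End X | ∃ x y : X,
          MulAction.orbit G x ≠ MulAction.orbit G y ∧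
          MulAction.stabilizer G x ≤ MulAction.stabilizer G y ∧
          f = collapse (G := G) x y} ∪ autSet G X) = gEnd G X := by
  change Submonoid.closure (collapseGenerators G X ∪ autSet G X) = gEnd G X
  refine le_antisymm (Submonoid.closure_le.mpr ?_) fun f hf => mem_closure_of_mem_gEnd hf
  rintro f (⟨x, y, -, hxy, rfl⟩ | ⟨e, he, rfl⟩)
  · exact collapse_mem_gEnd hxy
  · exact he

/-- For a finite group acting on a finite set, the collapsing maps
`[x ↦ y]` (for `Gx ≠ Gy` and `G_x ≤ G_y`) generate `End_G(X)` modulo `Aut_G(X)`. -/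
theorem stmt10 {G X : Type*} [Group G] [MulAction G X] [Finite G] [Finite X] :
    Submonoid.closure
      ({f : Function.End X | ∃ x y : X,
          MulAction.orbit G x ≠ MulAction.orbit G y ∧
          MulAction.stabilizer G x ≤ MulAction.stabilizer G y ∧
          f = collapse (G := G) x y} ∪ autSet G X) = gEnd G X :=
  stmt10_general
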